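/- arXiv:1811.12566 — 3 statements merged into one kernel-verified Lean document; each statement's English description precedes it below -/
import Mathlib

section
/- Let k, ℓ be integers ≥ 1. There exist a constant C > 0 and an integer N ≥ 1 such that for all x, y, ξ, η ∈ ℝⁿ: (1 + |y| + |η|^(ℓ/k)) / (1 + |x| + |ξ|^(ℓ/k)) ≤ C (1 + (1 + |x|^(k/ℓ) + |ξ|)|x−y| + (1 + |x| + |ξ|^(ℓ/k))|ξ−η|)^N. -/
private lemma lemA (s t a : ℝ) (hs : 0 ≤ s) (ht : 0 ≤ t) (ha : 0 ≤ a) (ℓ : ℕ)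
    (hal : a ≤ ℓ) : (s + t) ^ a ≤ 2 ^ ℓ * (s ^ a + t ^ a) := by
  have h2 : (2:ℝ) ^ a ≤ 2 ^ ℓ := by
    rw [← Real.rpow_natCast 2 ℓ]
    exact Real.rpow_le_rpow_of_exponent_le one_le_two hal
  have h2a : (0:ℝ) ≤ (2:ℝ) ^ a := Real.rpow_nonneg (by norm_num) a
  have h4 : (0:ℝ) ≤ s ^ a := Real.rpow_nonneg hs a
  have h5 : (0:ℝ) ≤ t ^ a := Real.rpow_nonneg ht a
  rcases le_total s t with h | h
  · have h1 : (s + t) ^ a ≤ (2 * t) ^ a :=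
      Real.rpow_le_rpow (by linarith) (by linarith) ha
    have h3 : ((2:ℝ) * t) ^ a = 2 ^ a * t ^ a := Real.mul_rpow (by norm_num) ht
    nlinarith [mul_le_mul_of_nonneg_right h2 h5]
  · have h1 : (s + t) ^ a ≤ (2 * s) ^ a :=
      Real.rpow_le_rpow (by linarith) (by linarith) ha
    have h3 : ((2:ℝ) * s) ^ a = 2 ^ a * s ^ a := Real.mul_rpow (by norm_num) hs
    nlinarith [mul_le_mul_of_nonneg_right h2 h4]

private lemma lemB (t a : ℝ) (ht : 0 ≤ t) (ha : 0 ≤ a) (ℓ : ℕ) (hal : a ≤ ℓ) :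
    t ^ a ≤ (1 + t) ^ ℓ := by
  calc t ^ a ≤ (1 + t) ^ a := Real.rpow_le_rpow ht (by linarith) ha
    _ ≤ (1 + t) ^ (ℓ:ℝ) := Real.rpow_le_rpow_of_exponent_le (by linarith) hal
    _ = (1 + t) ^ ℓ := Real.rpow_natCast _ _

/-- Temperateness inequality for the anharmonic metric `g^{(k,ℓ)}`. -/
theorem anharmonic_temperateness (n k ℓ : ℕ) (hk : 1 ≤ k) (hl : 1 ≤ ℓ) :
    ∃ C > (0 : ℝ), ∃ N : ℕ, 1 ≤ N ∧ ∀ x y ξ η : EuclideanSpace ℝ (Fin n),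
      (1 + ‖y‖ + ‖η‖ ^ ((ℓ : ℝ) / (k : ℝ))) / (1 + ‖x‖ + ‖ξ‖ ^ ((ℓ : ℝ) / (k : ℝ)))
        ≤ C * (1 + (1 + ‖x‖ ^ ((k : ℝ) / (ℓ : ℝ)) + ‖ξ‖) * ‖x - y‖
            + (1 + ‖x‖ + ‖ξ‖ ^ ((ℓ : ℝ) / (k : ℝ))) * ‖ξ - η‖) ^ N := by
  refine ⟨2 ^ (ℓ+1) + 1, by positivity, ℓ, hl, fun x y ξ η => ?_⟩
  have hk' : (1:ℝ) ≤ (k:ℝ) := by exact_mod_cast hk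
  have hl' : (1:ℝ) ≤ (ℓ:ℝ) := by exact_mod_cast hl
  set a : ℝ := (ℓ:ℝ)/(k:ℝ) with ha_def
  have ha : 0 ≤ a := by positivity
  have hal : a ≤ (ℓ:ℕ) := div_le_self (by linarith) hk'
  have hξa : 0 ≤ ‖ξ‖ ^ a := Real.rpow_nonneg (norm_nonneg _) a
  have hηa0 : 0 ≤ ‖η‖ ^ a := Real.rpow_nonneg (norm_nonneg _) a
  set D : ℝ := 1 + ‖x‖ + ‖ξ‖ ^ a with hD
  have hD1 : 1 ≤ D := by have := norm_nonneg x; simp only [hD]; linarith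
  have hxk : 0 ≤ ‖x‖ ^ ((k:ℝ)/(ℓ:ℝ)) := Real.rpow_nonneg (norm_nonneg _) _
  set c1 : ℝ := 1 + ‖x‖ ^ ((k:ℝ)/(ℓ:ℝ)) + ‖ξ‖ with hc1def
  have hc1 : 1 ≤ c1 := by have := norm_nonneg ξ; simp only [hc1def]; linarith
  set B : ℝ := 1 + c1 * ‖x - y‖ + D * ‖ξ - η‖ with hBdef
  have hxy0 := norm_nonneg (x - y)
  have hξη0 := norm_nonneg (ξ - η)
  have hxy : ‖x - y‖ ≤ B - 1 := by
    have h1 : ‖x - y‖ ≤ c1 * ‖x - y‖ := le_mul_of_one_le_left hxy0 hc1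
    have h2 : 0 ≤ D * ‖ξ - η‖ := by positivity
    simp only [hBdef]; linarith
  have hξη : 1 + ‖ξ - η‖ ≤ B := by
    have h1 : ‖ξ - η‖ ≤ D * ‖ξ - η‖ := le_mul_of_one_le_left hξη0 hD1
    have h2 : 0 ≤ c1 * ‖x - y‖ := by positivity
    simp only [hBdef]; linarith
  have hB1 : 1 ≤ B := by linarith
  have hBl : B ≤ B ^ ℓ := le_self_pow₀ hB1 (by omega)
  have hBl1 : 1 ≤ B ^ ℓ := by linarith
  -- numerator bounds
  have hy : ‖y‖ ≤ ‖x‖ + ‖x - y‖ := by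
    have := norm_sub_norm_le y x
    have h2 : ‖y - x‖ = ‖x - y‖ := norm_sub_rev y x
    linarith
  have hη : ‖η‖ ≤ ‖ξ‖ + ‖ξ - η‖ := by
    have := norm_sub_norm_le η ξ
    have h2 : ‖η - ξ‖ = ‖ξ - η‖ := norm_sub_rev η ξ
    linarith
  have hηa : ‖η‖ ^ a ≤ 2 ^ ℓ * (‖ξ‖ ^ a + ‖ξ - η‖ ^ a) := by
    calc ‖η‖ ^ a ≤ (‖ξ‖ + ‖ξ - η‖) ^ a :=
          Real.rpow_le_rpow (norm_nonneg _) hη ha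
      _ ≤ 2 ^ ℓ * (‖ξ‖ ^ a + ‖ξ - η‖ ^ a) :=
          lemA _ _ _ (norm_nonneg _) (norm_nonneg _) ha ℓ hal
  have hξηa : ‖ξ - η‖ ^ a ≤ B ^ ℓ := by
    calc ‖ξ - η‖ ^ a ≤ (1 + ‖ξ - η‖) ^ ℓ := lemB _ _ hξη0 ha ℓ hal
      _ ≤ B ^ ℓ := pow_le_pow_left₀ (by linarith) hξη ℓ
  have hξηa0 : 0 ≤ ‖ξ - η‖ ^ a := Real.rpow_nonneg hξη0 a
  have h2l : (1:ℝ) ≤ 2 ^ ℓ := one_le_pow₀ one_le_two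
  have hDpos : 0 < D := by linarith
  rw [div_le_iff₀ hDpos]
  have key : 1 + ‖y‖ + ‖η‖ ^ a ≤ 2 ^ ℓ * D + ‖x - y‖ + 2 ^ ℓ * B ^ ℓ := by
    have h1 : ‖η‖ ^ a ≤ 2 ^ ℓ * ‖ξ‖ ^ a + 2 ^ ℓ * B ^ ℓ := by
      have := mul_le_mul_of_nonneg_left hξηa (le_trans zero_le_one h2l)
      linarith
    have h2 : 1 + ‖x‖ + 2 ^ ℓ * ‖ξ‖ ^ a ≤ 2 ^ ℓ * D := by
      have hxn := norm_nonneg x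
      simp only [hD]
      nlinarith
    linarith
  have hfin : 2 ^ ℓ * D + ‖x - y‖ + 2 ^ ℓ * B ^ ℓ
      ≤ (2 ^ (ℓ+1) + 1) * B ^ ℓ * D := by
    have h2l0 : (0:ℝ) < 2 ^ ℓ := by positivity
    have e1 : 2 ^ ℓ * D ≤ 2 ^ ℓ * B ^ ℓ * D :=
      mul_le_mul_of_nonneg_right (le_mul_of_one_le_right (le_of_lt h2l0) hBl1)
        (le_of_lt hDpos)
    have e2 : ‖x - y‖ ≤ B ^ ℓ * D := by
      have : B ^ ℓ ≤ B ^ ℓ * D := le_mul_of_one_le_right (by linarith) hD1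
      linarith
    have e3 : 2 ^ ℓ * B ^ ℓ ≤ 2 ^ ℓ * B ^ ℓ * D :=
      le_mul_of_one_le_right (by positivity) hD1
    have hpow : (2:ℝ) ^ (ℓ+1) = 2 ^ ℓ + 2 ^ ℓ := by ring
    rw [hpow]
    linarith
  calc 1 + ‖y‖ + ‖η‖ ^ a ≤ 2 ^ ℓ * D + ‖x - y‖ + 2 ^ ℓ * B ^ ℓ := key
    _ ≤ (2 ^ (ℓ+1) + 1) * B ^ ℓ * D := hfin
    _ = (2 ^ (ℓ+1) + 1) * B ^ ℓ * D := rfl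
end

section
/- Let k, ℓ be integers ≥ 1 and multi-indices α, β. There exists C = C(α, β, k, ℓ, n) > 0 such that for all x, ξ ∈ ℝⁿ: |∂_x^β ∂_ξ^α (|x|^(2k) + |ξ|^(2ℓ))| ≤ C (1 + |x|^(2k) + |ξ|^(2ℓ))^(1 − |β|/(2k) − |α|/(2ℓ)). -/
/-!
The symbol is `q(x) + r(ξ)` with `q = |x|^(2k)` and `r = |ξ|^(2ℓ)` polynomials in separate
variables, so mixed derivatives vanish, and `∂_x^β q` is a polynomial of degree at most
`2k - |β|` (zero when `|β| > 2k`). A polynomial of degree `d` is `O(⟨x⟩^d)` with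
`⟨x⟩ = √(1 + |x|²)`, and `⟨x⟩^(2k) ≤ 2^k (1 + |x|^(2k))`; raising this to the power
`1 - |β|/(2k) = (2k - |β|)/(2k)` gives the estimate.
-/

open MvPolynomial

/-- The mixed multi-index partial derivative `∂_x^β ∂_ξ^α` acting on polynomials in the
variables `(x, ξ) ∈ ℝⁿ × ℝⁿ` (the `x`-variables are indexed by `Sum.inl`, the
`ξ`-variables by `Sum.inr`). -/
noncomputable def multiPDeriv (n : ℕ) (β α : Fin n → ℕ) :
    Module.End ℝ (MvPolynomial (Fin n ⊕ Fin n) ℝ) :=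
  (List.ofFn fun i : Fin n =>
      ((pderiv (R := ℝ) (Sum.inl i : Fin n ⊕ Fin n)).toLinearMap ^ β i)).prod *
  (List.ofFn fun i : Fin n =>
      ((pderiv (R := ℝ) (Sum.inr i : Fin n ⊕ Fin n)).toLinearMap ^ α i)).prod

theorem sqrt_one_add_pow_le_rpow {u T : ℝ} (hu : 0 ≤ u) {k m : ℕ} (hk : 1 ≤ k)
    (hm : m ≤ 2 * k) (hT : 1 + u ^ k ≤ T) :
    √(1 + u) ^ (2 * k - m) ≤
      ((2 : ℝ) ^ k) ^ (1 - (m : ℝ) / (2 * k)) * T ^ (1 - (m : ℝ) / (2 * k)) := by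
  set e : ℝ := 1 - (m : ℝ) / (2 * k)
  have hk0 : (0 : ℝ) < 2 * k := by positivity
  have he : 0 ≤ e := by
    rw [sub_nonneg, div_le_one hk0]
    exact_mod_cast hm
  have hexp : ((2 * k - m : ℕ) : ℝ) = (2 * k : ℕ) * e := by
    rw [Nat.cast_sub hm]; push_cast; unfold e; field_simp
  have hpow : √(1 + u) ^ (2 * k) ≤ 2 ^ k * T :=
    calc √(1 + u) ^ (2 * k) = (1 + u) ^ k := by rw [pow_mul, Real.sq_sqrt (by linarith)]
      _ ≤ 2 ^ (k - 1) * (1 ^ k + u ^ k) := add_pow_le zero_le_one hu k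
      _ ≤ 2 ^ k * T := by
        rw [one_pow]
        exact mul_le_mul (pow_le_pow_right₀ one_le_two (Nat.sub_le k 1)) hT
          (by positivity) (by positivity)
  calc √(1 + u) ^ (2 * k - m) = (√(1 + u) ^ (2 * k)) ^ e := by
        rw [← Real.rpow_natCast, hexp, Real.rpow_mul (Real.sqrt_nonneg _), Real.rpow_natCast]
    _ ≤ (2 ^ k * T) ^ e := Real.rpow_le_rpow (by positivity) hpow he
    _ = _ := Real.mul_rpow (by positivity) (by linarith [pow_nonneg hu k])

namespace MvPolynomial

variable {R σ τ : Type*} [CommSemiring R]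

theorem totalDegree_pderiv_add_one_le (i : σ) {f : MvPolynomial σ R} (h : pderiv i f ≠ 0) :
    (pderiv i f).totalDegree + 1 ≤ f.totalDegree := by
  obtain ⟨m, hm, hdeg⟩ := Finset.exists_mem_eq_sup _ (support_nonempty.2 h)
    fun s : σ →₀ ℕ => s.sum fun _ e => e
  have hcoeff : coeff (m + Finsupp.single i 1) f ≠ 0 := by
    have := mem_support_iff.1 hm
    rw [coeff_pderiv] at this
    exact left_ne_zero_of_mul this
  calc (pderiv i f).totalDegree + 1 = (m + Finsupp.single i 1).sum fun _ e => e := by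
        rw [totalDegree, hdeg, Finsupp.sum_add_index' (fun _ => rfl) (fun _ _ _ => rfl),
          Finsupp.sum_single_index rfl]
    _ ≤ f.totalDegree := le_totalDegree (mem_support_iff.2 hcoeff)

-- Phrased for `E f ≠ 0` so that it also says that `E` kills polynomials of degree `< m`.
def LowersTotalDegreeBy (E : Module.End R (MvPolynomial σ R)) (m : ℕ) : Prop :=
  ∀ f, E f ≠ 0 → (E f).totalDegree + m ≤ f.totalDegree

namespace LowersTotalDegreeBy

theorem one : LowersTotalDegreeBy (1 : Module.End R (MvPolynomial σ R)) 0 :=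
  fun _ _ => le_rfl

theorem mul {E F : Module.End R (MvPolynomial σ R)} {m m' : ℕ}
    (hE : LowersTotalDegreeBy E m) (hF : LowersTotalDegreeBy F m') :
    LowersTotalDegreeBy (E * F) (m + m') := by
  intro f hEF
  have hF0 : F f ≠ 0 := fun h => hEF (by rw [Module.End.mul_apply, h, map_zero])
  have := hE (F f) hEF
  have := hF f hF0
  rw [Module.End.mul_apply]
  omega

theorem pow {E : Module.End R (MvPolynomial σ R)} {m : ℕ} (hE : LowersTotalDegreeBy E m) :
    ∀ j : ℕ, LowersTotalDegreeBy (E ^ j) (j * m)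
  | 0 => by simpa using one
  | j + 1 => by simpa [pow_succ, add_mul] using (hE.pow j).mul hE

end LowersTotalDegreeBy

theorem lowersTotalDegreeBy_pderiv (i : σ) :
    LowersTotalDegreeBy
      (pderiv i : Derivation R (MvPolynomial σ R) (MvPolynomial σ R)).toLinearMap 1 :=
  fun _ => totalDegree_pderiv_add_one_le i

noncomputable def multiIndexPDeriv {n : ℕ} (e : Fin n → σ) (γ : Fin n → ℕ) :
    Module.End R (MvPolynomial σ R) :=
  (List.ofFn fun i => (pderiv (e i)).toLinearMap ^ γ i).prod

theorem multiIndexPDeriv_succ {n : ℕ} (e : Fin (n + 1) → σ) (γ : Fin (n + 1) → ℕ) :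
    (multiIndexPDeriv e γ : Module.End R (MvPolynomial σ R)) =
      (pderiv (e 0)).toLinearMap ^ γ 0 *
        multiIndexPDeriv (fun i => e i.succ) fun i => γ i.succ := by
  rw [multiIndexPDeriv, List.ofFn_succ, List.prod_cons]; rfl

theorem lowersTotalDegreeBy_multiIndexPDeriv {n : ℕ} (e : Fin n → σ) (γ : Fin n → ℕ) :
    LowersTotalDegreeBy (multiIndexPDeriv e γ : Module.End R (MvPolynomial σ R))
      (∑ i, γ i) := by
  induction n with
  | zero => simpa [multiIndexPDeriv] using LowersTotalDegreeBy.one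
  | succ n ih =>
    rw [multiIndexPDeriv_succ, Fin.sum_univ_succ]
    simpa using ((lowersTotalDegreeBy_pderiv (e 0)).pow (γ 0)).mul (ih _ _)

theorem pow_pderiv_rename {u : τ → σ} (hu : Function.Injective u) (i : τ) (m : ℕ)
    (p : MvPolynomial τ R) :
    ((pderiv (u i)).toLinearMap ^ m : Module.End R (MvPolynomial σ R)) (rename u p) =
      rename u (((pderiv i).toLinearMap ^ m : Module.End R (MvPolynomial τ R)) p) := by
  induction m with
  | zero => rfl
  | succ m ih =>
    rw [pow_succ', Module.End.mul_apply, ih, pow_succ', Module.End.mul_apply]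
    exact pderiv_rename hu i _

theorem multiIndexPDeriv_rename {u : τ → σ} (hu : Function.Injective u) {n : ℕ}
    (e : Fin n → τ) (γ : Fin n → ℕ) (p : MvPolynomial τ R) :
    multiIndexPDeriv (fun i => u (e i)) γ (rename u p) = rename u (multiIndexPDeriv e γ p) := by
  induction n generalizing p with
  | zero => rfl
  | succ n ih =>
    rw [multiIndexPDeriv_succ, multiIndexPDeriv_succ, Module.End.mul_apply, Module.End.mul_apply,
      ih, pow_pderiv_rename hu]

theorem multiIndexPDeriv_zero {n : ℕ} (e : Fin n → σ) :
    (multiIndexPDeriv e 0 : Module.End R (MvPolynomial σ R)) = 1 :=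
  List.prod_eq_one (by simp)

theorem multiIndexPDeriv_rename_eq_zero {u : τ → σ} {n : ℕ} {e : Fin n → σ}
    (he : ∀ i t, e i ≠ u t) {γ : Fin n → ℕ} (hγ : γ ≠ 0) (p : MvPolynomial τ R) :
    multiIndexPDeriv e γ (rename u p) = 0 := by
  classical
  induction n with
  | zero => exact absurd (Subsingleton.elim γ 0) hγ
  | succ n ih =>
    rw [multiIndexPDeriv_succ, Module.End.mul_apply]
    by_cases htail : (fun i : Fin n => γ i.succ) = 0
    · have h0 : γ 0 ≠ 0 := fun h0 => hγ (_root_.funext (Fin.cases h0 (congrFun htail)))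
      have hkill : pderiv (e 0) (rename u p) = 0 :=
        pderiv_eq_zero_of_notMem_vars fun hv => by
          obtain ⟨t, -, ht⟩ := Finset.mem_image.1 (vars_rename u p hv)
          exact he 0 t ht.symm
      obtain ⟨j, hj⟩ := Nat.exists_eq_succ_of_ne_zero h0
      rw [htail, multiIndexPDeriv_zero, Module.End.one_apply, hj, pow_succ, Module.End.mul_apply]
      simp [hkill]
    · rw [ih (fun i t => he i.succ t) htail, map_zero]

theorem abs_eval_le_mul_pow_totalDegree (f : MvPolynomial σ ℝ) {x : σ → ℝ} {s : ℝ}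
    (hs : 1 ≤ s) (hx : ∀ i, |x i| ≤ s) :
    |eval x f| ≤ (∑ d ∈ f.support, |coeff d f|) * s ^ f.totalDegree := by
  rw [eval_eq, Finset.sum_mul]
  refine (Finset.abs_sum_le_sum_abs _ _).trans (Finset.sum_le_sum fun d hd => ?_)
  rw [abs_mul]
  refine mul_le_mul_of_nonneg_left ?_ (abs_nonneg _)
  calc |∏ i ∈ d.support, x i ^ d i| ≤ ∏ i ∈ d.support, s ^ d i := by
        rw [Finset.abs_prod]
        exact Finset.prod_le_prod (fun _ _ => abs_nonneg _) fun i _ =>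
          (abs_pow (x i) _).trans_le (pow_le_pow_left₀ (abs_nonneg _) (hx i) _)
    _ = s ^ d.sum fun _ e => e := Finset.prod_pow_eq_pow_sum _ _ _
    _ ≤ s ^ f.totalDegree := pow_le_pow_right₀ hs (le_totalDegree hd)

theorem exists_abs_eval_le_rpow {ι : Type*} [Fintype ι] {E : Module.End ℝ (MvPolynomial ι ℝ)}
    {m : ℕ} (hE : LowersTotalDegreeBy E m) {k : ℕ} (hk : 1 ≤ k) {f : MvPolynomial ι ℝ}
    (hf : f.totalDegree ≤ 2 * k) :
    ∃ C > 0, ∀ (x : ι → ℝ) (T : ℝ), 1 + (∑ i, x i ^ 2) ^ k ≤ T →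
      |eval x (E f)| ≤ C * T ^ (1 - (m : ℝ) / (2 * k)) := by
  set A := ∑ d ∈ (E f).support, |coeff d (E f)|
  refine ⟨(A + 1) * ((2 : ℝ) ^ k) ^ (1 - (m : ℝ) / (2 * k)), by positivity,
    fun x T hT => ?_⟩
  have hu : 0 ≤ ∑ i, x i ^ 2 := by positivity
  have hT0 : 0 < T := by linarith [pow_nonneg hu k]
  by_cases hEf : E f = 0
  · rw [hEf, map_zero, abs_zero]
    positivity
  have hdeg := hE f hEf
  set s := √(1 + ∑ i, x i ^ 2)
  have hs : 1 ≤ s := Real.one_le_sqrt.2 (by linarith)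
  have hx : ∀ i, |x i| ≤ s := fun i => Real.abs_le_sqrt <| by
    linarith [Finset.single_le_sum (fun j _ => sq_nonneg (x j)) (Finset.mem_univ i)]
  calc |eval x (E f)| ≤ A * s ^ (E f).totalDegree := abs_eval_le_mul_pow_totalDegree _ hs hx
    _ ≤ (A + 1) * s ^ (2 * k - m) := by
      gcongr
      · linarith
      · omega
    _ ≤ (A + 1) * (((2 : ℝ) ^ k) ^ (1 - (m : ℝ) / (2 * k)) * T ^ (1 - (m : ℝ) / (2 * k))) :=
      mul_le_mul_of_nonneg_left (sqrt_one_add_pow_le_rpow hu hk (by omega) hT) (by positivity)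
    _ = _ := by ring

theorem totalDegree_sum_X_sq_pow_le {ι : Type*} [Nontrivial R] [Fintype ι] (k : ℕ) :
    ((∑ i : ι, X i ^ 2) ^ k : MvPolynomial ι R).totalDegree ≤ 2 * k :=
  (totalDegree_pow _ k).trans <| by
    rw [mul_comm]
    exact Nat.mul_le_mul_right k (totalDegree_finsetSum_le fun i _ => (totalDegree_X_pow _ _).le)

end MvPolynomial

theorem multiPDeriv_eq_mul (n : ℕ) (β α : Fin n → ℕ) :
    multiPDeriv n β α = multiIndexPDeriv Sum.inl β * multiIndexPDeriv Sum.inr α := rfl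

theorem eval_sumElim_multiPDeriv_rename_inl {n : ℕ} (β α : Fin n → ℕ) (x ξ : Fin n → ℝ)
    (p : MvPolynomial (Fin n) ℝ) :
    eval (Sum.elim x ξ) (multiPDeriv n β α (rename Sum.inl p)) =
      if α = 0 then eval x (multiIndexPDeriv id β p) else 0 := by
  have hcomm : multiIndexPDeriv (Sum.inl : Fin n → Fin n ⊕ Fin n) β (rename Sum.inl p) =
      rename Sum.inl (multiIndexPDeriv id β p) := multiIndexPDeriv_rename Sum.inl_injective id β p
  rw [multiPDeriv_eq_mul, Module.End.mul_apply]
  split_ifs with hα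
  · rw [hα, multiIndexPDeriv_zero, Module.End.one_apply, hcomm, eval_rename, Sum.elim_comp_inl]
  · rw [multiIndexPDeriv_rename_eq_zero (fun _ _ => Sum.inr_ne_inl) hα, map_zero, map_zero]

theorem eval_sumElim_multiPDeriv_rename_inr {n : ℕ} (β α : Fin n → ℕ) (x ξ : Fin n → ℝ)
    (p : MvPolynomial (Fin n) ℝ) :
    eval (Sum.elim x ξ) (multiPDeriv n β α (rename Sum.inr p)) =
      if β = 0 then eval ξ (multiIndexPDeriv id α p) else 0 := by
  have hcomm : multiIndexPDeriv (Sum.inr : Fin n → Fin n ⊕ Fin n) α (rename Sum.inr p) =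
      rename Sum.inr (multiIndexPDeriv id α p) := multiIndexPDeriv_rename Sum.inr_injective id α p
  rw [multiPDeriv_eq_mul, Module.End.mul_apply, hcomm]
  split_ifs with hβ
  · rw [hβ, multiIndexPDeriv_zero, Module.End.one_apply, eval_rename, Sum.elim_comp_inr]
  · rw [multiIndexPDeriv_rename_eq_zero (fun _ _ => Sum.inl_ne_inr) hβ, map_zero]

theorem anharmonic_symbol_class_general (n k ℓ : ℕ) (hk : 1 ≤ k) (hl : 1 ≤ ℓ)
    (β α : Fin n → ℕ) :
    ∃ C > (0 : ℝ), ∀ x ξ : Fin n → ℝ,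
      |eval (Sum.elim x ξ)
          (multiPDeriv n β α
            ((∑ i : Fin n, X (Sum.inl i : Fin n ⊕ Fin n) ^ 2) ^ k +
              (∑ i : Fin n, X (Sum.inr i : Fin n ⊕ Fin n) ^ 2) ^ ℓ))|
        ≤ C * (1 + (∑ i, x i ^ 2) ^ k + (∑ i, ξ i ^ 2) ^ ℓ) ^
            ((1 : ℝ) - (∑ i, β i : ℝ) / (2 * (k : ℝ)) - (∑ i, α i : ℝ) / (2 * (ℓ : ℝ))) := by
  obtain ⟨C₁, hC₁, hx⟩ := exists_abs_eval_le_rpow (lowersTotalDegreeBy_multiIndexPDeriv id β) hk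
    (totalDegree_sum_X_sq_pow_le k)
  obtain ⟨C₂, hC₂, hξ⟩ := exists_abs_eval_le_rpow (lowersTotalDegreeBy_multiIndexPDeriv id α) hl
    (totalDegree_sum_X_sq_pow_le ℓ)
  refine ⟨C₁ + C₂, by positivity, fun x ξ => ?_⟩
  set T := 1 + (∑ i, x i ^ 2) ^ k + (∑ i, ξ i ^ 2) ^ ℓ
  set e := (1 : ℝ) - (∑ i, β i : ℝ) / (2 * (k : ℝ)) - (∑ i, α i : ℝ) / (2 * (ℓ : ℝ))
  have hinl : |if α = 0 then eval x (multiIndexPDeriv id β ((∑ i, X i ^ 2) ^ k)) else 0| ≤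
      C₁ * T ^ e := by
    split_ifs with hα
    · simpa [e, hα] using hx x T (by simp [T]; positivity)
    · rw [abs_zero]; positivity
  have hinr : |if β = 0 then eval ξ (multiIndexPDeriv id α ((∑ i, X i ^ 2) ^ ℓ)) else 0| ≤
      C₂ * T ^ e := by
    split_ifs with hβ
    · simpa [e, hβ] using hξ ξ T (by simp [T]; positivity)
    · rw [abs_zero]; positivity
  have hsymbol : ∀ (u : Fin n → Fin n ⊕ Fin n) (j : ℕ),
      (∑ i, X (u i) ^ 2) ^ j = rename u ((∑ i, X i ^ 2) ^ j : MvPolynomial (Fin n) ℝ) := by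
    simp
  rw [hsymbol, hsymbol, map_add, map_add, eval_sumElim_multiPDeriv_rename_inl,
    eval_sumElim_multiPDeriv_rename_inr]
  calc _ ≤ _ := abs_add_le _ _
    _ ≤ C₁ * T ^ e + C₂ * T ^ e := add_le_add hinl hinr
    _ = (C₁ + C₂) * T ^ e := by ring

/-- Symbol estimate: `|∂_x^β ∂_ξ^α (|x|^(2k) + |ξ|^(2ℓ))|
  ≤ C (1 + |x|^(2k) + |ξ|^(2ℓ))^(1 - |β|/(2k) - |α|/(2ℓ))`. -/
theorem anharmonic_symbol_class (n k ℓ : ℕ) (hn : 1 ≤ n) (hk : 1 ≤ k) (hl : 1 ≤ ℓ)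
    (β α : Fin n → ℕ) :
    ∃ C > (0 : ℝ), ∀ x ξ : Fin n → ℝ,
      |eval (Sum.elim x ξ)
          (multiPDeriv n β α
            ((∑ i : Fin n, X (Sum.inl i : Fin n ⊕ Fin n) ^ 2) ^ k +
              (∑ i : Fin n, X (Sum.inr i : Fin n ⊕ Fin n) ^ 2) ^ ℓ))|
        ≤ C * (1 + (∑ i, x i ^ 2) ^ k + (∑ i, ξ i ^ 2) ^ ℓ) ^
            ((1 : ℝ) - (∑ i, β i : ℝ) / (2 * (k : ℝ)) - (∑ i, α i : ℝ) / (2 * (ℓ : ℝ))) :=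
  anharmonic_symbol_class_general n k ℓ hk hl β α
end

section
/- Let λ ≠ 0, μ ∈ ℝ, and consider the anharmonic oscillator H_{λ,μ} = −d²/du² + (1/4)(λu² − μ/λ)² on L²(ℝ). For any 1 ≤ r < ∞ and γ > 3/(4r), the operator (I + H_{λ,μ})^(−γ) belongs to the Schatten class S_r(L²(ℝ)). -/
set_option maxHeartbeats 1000000

open MeasureTheory
open intervalIntegral Set Filter

/-- Cauchy–Schwarz for interval integrals of continuous functions. -/
lemma sq_integral_le {g : ℝ → ℝ} (hg : Continuous g) {a b : ℝ} (hab : a ≤ b) :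
    (∫ x in a..b, g x) ^ 2 ≤ (b - a) * ∫ x in a..b, g x ^ 2 := by
  rcases eq_or_lt_of_le hab with rfl | h
  · simp
  have hL0 : 0 < b - a := by linarith
  set m := (∫ x in a..b, g x) / (b - a) with hm
  have key : 0 ≤ ∫ x in a..b, (g x - m)^2 :=
    intervalIntegral.integral_nonneg hab (fun x _ => sq_nonneg _)
  have h1 : IntervalIntegrable (fun x => g x ^ 2) volume a b :=
    (hg.pow 2).intervalIntegrable _ _
  have h2 : IntervalIntegrable g volume a b := hg.intervalIntegrable _ _
  have expand : ∫ x in a..b, (g x - m)^2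
      = (∫ x in a..b, g x ^ 2) - 2*m*(∫ x in a..b, g x) + (b - a) * m^2 := by
    have e : ∀ x : ℝ, (g x - m)^2 = g x^2 - (2*m) * g x + m^2 := by intro x; ring
    simp_rw [e]
    rw [intervalIntegral.integral_add ((h1.sub (h2.const_mul (2*m)))) intervalIntegrable_const,
      intervalIntegral.integral_sub h1 (h2.const_mul (2*m)),
      intervalIntegral.integral_const_mul, intervalIntegral.integral_const]
    simp only [smul_eq_mul]
  rw [expand] at key
  have hmL : m * (b - a) = ∫ x in a..b, g x := by rw [hm, div_mul_cancel₀ _ hL0.ne']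
  nlinarith [key, hmL]

/-- An L²-bounded solution of `f'' = q f` with `q ≥ 0` on `[x0, ∞)` satisfies
`f a f' a ≤ 0` for `a ≥ x0`. -/
lemma no_pos {f : ℝ → ℝ} (hf : ContDiff ℝ (⊤ : ℕ∞) f) {q : ℝ → ℝ} {x0 : ℝ}
    (hode : ∀ x, x0 ≤ x → deriv (deriv f) x = q x * f x)
    (hq : ∀ x, x0 ≤ x → 0 ≤ q x)
    (hint : ∀ a A : ℝ, a ≤ A → (∫ x in a..A, (f x)^2) ≤ 1)
    {a : ℝ} (ha : x0 ≤ a) : f a * deriv f a ≤ 0 := by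
  by_contra hc
  push_neg at hc
  set c := f a * deriv f a with hcdef
  have hdf : Differentiable ℝ f := hf.differentiable (by simp)
  have hdf' : Differentiable ℝ (deriv f) :=
    ((contDiff_infty_iff_deriv.mp (hf.of_le (mod_cast le_top))).2).differentiable
      (by simp)
  have hcont' : Continuous (deriv f) := hdf'.continuous
  have huderiv : ∀ x, HasDerivAt (fun y => f y * deriv f y)
      ((deriv f x)^2 + f x * deriv (deriv f) x) x := by
    intro x
    have h1 := ((hdf x).hasDerivAt).mul ((hdf' x).hasDerivAt)
    exact h1.congr_deriv (by ring)
  have humono : MonotoneOn (fun y => f y * deriv f y) (Ici a) := by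
    apply monotoneOn_of_deriv_nonneg (convex_Ici a)
    · exact (hdf.continuous.mul hcont').continuousOn
    · intro x _
      exact (huderiv x).differentiableAt.differentiableWithinAt
    · intro x hx
      rw [interior_Ici] at hx
      have hxx0 : x0 ≤ x := le_trans ha (le_of_lt hx)
      rw [(huderiv x).deriv, hode x hxx0]
      have := hq x hxx0
      nlinarith [sq_nonneg (deriv f x), sq_nonneg (f x), mul_nonneg this (sq_nonneg (f x))]
  have hub : ∀ x, a ≤ x → c ≤ f x * deriv f x := by
    intro x hx
    exact humono (self_mem_Ici) hx hx
  -- F x = f x ^ 2 - 2 c (x - a) is monotone on [a, ∞)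
  have hFderiv : ∀ x, HasDerivAt (fun y => f y ^ 2 - 2*c*y) (2 * f x * deriv f x - 2*c) x := by
    intro x
    have h1 := (((hdf x).hasDerivAt).pow 2).sub ((hasDerivAt_id x).const_mul (2*c))
    exact h1.congr_deriv (by ring)
  have hFmono : MonotoneOn (fun y => f y ^ 2 - 2*c*y) (Ici a) := by
    apply monotoneOn_of_deriv_nonneg (convex_Ici a)
    · exact ((hdf.continuous.pow 2).sub (continuous_const.mul continuous_id)).continuousOn
    · intro x _
      exact (hFderiv x).differentiableAt.differentiableWithinAt
    · intro x hx
      rw [interior_Ici] at hx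
      rw [(hFderiv x).deriv]
      have := hub x (le_of_lt hx)
      nlinarith
  have hlow : ∀ x, a ≤ x → 2*c*(x - a) ≤ f x ^ 2 := by
    intro x hx
    have := hFmono self_mem_Ici hx hx
    simp only at this
    nlinarith [sq_nonneg (f a)]
  -- integrate to contradict the L² bound
  set A := a + Real.sqrt (2/c) with hA
  have hsq : Real.sqrt (2/c) ^ 2 = 2/c := Real.sq_sqrt (by positivity)
  have haA : a ≤ A := by
    rw [hA]
    exact le_add_of_nonneg_right (Real.sqrt_nonneg _)
  have hI1 : (∫ x in a..A, 2*c*(x - a)) ≤ ∫ x in a..A, (f x)^2 := by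
    apply intervalIntegral.integral_mono_on haA
    · exact (((continuous_const.mul (continuous_id.sub continuous_const))).intervalIntegrable _ _)
    · exact ((hdf.continuous.pow 2).intervalIntegrable _ _)
    · intro x hx
      exact hlow x hx.1
  have hI2 : (∫ x in a..A, 2*c*(x - a)) = c * (A - a)^2 := by
    have h0 : (∫ x in a..A, 2*c*(x - a)) = ∫ u in (a-a)..(A-a), 2*c*u :=
      intervalIntegral.integral_comp_sub_right (fun u => 2*c*u) a
    rw [h0, intervalIntegral.integral_const_mul, integral_id]
    ring
  have hval : c * (A - a)^2 = 2 := by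
    have h1 : A - a = Real.sqrt (2/c) := by rw [hA]; ring
    rw [h1, hsq]
    field_simp
  have := hint a A haA
  rw [hI2, hval] at hI1
  linarith

lemma apriori {lam μ : ℝ} (hlam : lam ≠ 0) {f : ℝ → ℝ} {Ej : ℝ}
    (hf : ContDiff ℝ (⊤ : ℕ∞) f)
    (hL2 : MemLp f 2 (volume : Measure ℝ))
    (hnorm : ∫ x : ℝ, f x * f x = 1)
    (heig : ∀ x : ℝ, -(deriv (deriv f) x)
        + (1 / 4) * (lam * x ^ 2 - μ / lam) ^ 2 * f x + f x = Ej * f x) :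
    1 ≤ Ej ∧ (∀ R : ℝ, (∫ x in (-R)..R, (deriv f x)^2) ≤ Ej) ∧
      ∀ R : ℝ, 1 + 2*Real.sqrt |μ|/|lam| ≤ R → 128 * Ej ≤ lam^2 * R^4 →
        3/4 ≤ ∫ x in (-R)..R, (f x)^2 := by
  set V : ℝ → ℝ := fun x => (1/4)*(lam*x^2 - μ/lam)^2 with hV
  have hVcont : Continuous V := by
    apply Continuous.mul continuous_const
    exact ((continuous_const.mul (continuous_pow 2)).sub continuous_const).pow 2
  have hVnonneg : ∀ x, 0 ≤ V x := fun x => by simp only [hV]; positivity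
  have hVeven : ∀ x : ℝ, V (-x) = V x := by intro x; simp [hV]
  have hode : ∀ x, deriv (deriv f) x = (V x + 1 - Ej) * f x := by
    intro x
    have h := heig x
    simp only [hV]
    nlinarith [h]
  have hdf : Differentiable ℝ f := hf.differentiable (by simp)
  have hdf' : Differentiable ℝ (deriv f) :=
    ((contDiff_infty_iff_deriv.mp (hf.of_le (mod_cast le_top))).2).differentiable
      (by simp)
  have hcf' : Continuous (deriv f) := hdf'.continuous
  have ic3 : Continuous (fun x => (f x)^2) := hdf.continuous.pow 2
  have ic1 : Continuous (fun x => (deriv f x)^2) := hcf'.pow 2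
  have ic2 : Continuous (fun x => (V x + 1) * (f x)^2) :=
    (hVcont.add continuous_const).mul ic3
  have hsqint : Integrable (fun x => (f x)^2) (volume : Measure ℝ) := hL2.integrable_sq
  have htot : (∫ x : ℝ, (f x)^2) = 1 := by simpa [sq] using hnorm
  have hint : ∀ a A : ℝ, a ≤ A → (∫ x in a..A, (f x)^2) ≤ 1 := by
    intro a A haA
    rw [intervalIntegral.integral_of_le haA]
    calc (∫ x in Set.Ioc a A, (f x)^2) ≤ ∫ x : ℝ, (f x)^2 :=
          setIntegral_le_integral hsqint (Eventually.of_forall fun x => sq_nonneg _)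
      _ = 1 := htot
  have htend : Tendsto (fun A : ℝ => ∫ x in (-A)..A, (f x)^2) atTop (nhds 1) := by
    have := MeasureTheory.intervalIntegral_tendsto_integral hsqint
      tendsto_neg_atTop_atBot tendsto_id
    rwa [htot] at this
  set R0 : ℝ := 1 + 2*Real.sqrt |μ|/|lam| with hR0
  have hlamabs : (0:ℝ) < |lam| := abs_pos.mpr hlam
  have hR0one : 1 ≤ R0 := by
    rw [hR0]
    have : 0 ≤ 2*Real.sqrt |μ|/|lam| := by positivity
    linarith
  have hVlower : ∀ x : ℝ, R0 ≤ |x| → lam^2*x^4/16 ≤ V x := by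
    intro x hx
    have h2 : 2*Real.sqrt |μ|/|lam| ≤ |x| := by
      rw [hR0] at hx; linarith
    have hs : Real.sqrt |μ| ^ 2 = |μ| := Real.sq_sqrt (abs_nonneg μ)
    have h3 : 4*|μ| ≤ lam^2 * x^2 := by
      have hmul := mul_le_mul h2 h2 (by positivity) (abs_nonneg x)
      have hx2 : |x| * |x| = x^2 := by rw [abs_mul_abs_self x]; ring
      have hdiv : (2*Real.sqrt |μ|/|lam|) * (2*Real.sqrt |μ|/|lam|) = 4*|μ|/lam^2 := by
        rw [div_mul_div_comm]
        rw [show (2*Real.sqrt |μ|)*(2*Real.sqrt |μ|) = 4 * (Real.sqrt |μ|)^2 by ring, hs]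
        congr 1
        rw [abs_mul_abs_self lam]; ring
      rw [hdiv, hx2] at hmul
      have hl2 : (0:ℝ) < lam^2 := by positivity
      rw [div_le_iff₀ hl2] at hmul
      nlinarith [hmul]
    have hz : (0:ℝ) ≤ lam^2*x^2 := by positivity
    have key : lam^4 * x^4 / 16 ≤ (1/4) * (lam^2*x^2 - μ)^2 := by
      have hμ1 : μ ≤ |μ| := le_abs_self μ
      have hμ2 : -|μ| ≤ μ := neg_abs_le μ
      nlinarith [mul_le_mul_of_nonneg_right h3 hz, sq_nonneg (lam^2*x^2 - μ)]
    have hl2 : (0:ℝ) < lam^2 := by positivity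
    have h4 : lam^2*x^4/16 ≤ ((1/4) * (lam^2*x^2 - μ)^2) / lam^2 := by
      rw [le_div_iff₀ hl2]
      nlinarith [key]
    calc lam^2*x^4/16 ≤ ((1/4) * (lam^2*x^2 - μ)^2) / lam^2 := h4
      _ = V x := by simp only [hV]; field_simp
  set x1 : ℝ := R0 + 16*(1+|Ej|)/lam^2 + 1 with hx1
  have hl2 : (0:ℝ) < lam^2 := by positivity
  have hx1R0 : R0 ≤ x1 := by
    rw [hx1]
    have : 0 ≤ 16*(1+|Ej|)/lam^2 := by positivity
    linarith
  have hx1one : 1 ≤ x1 := le_trans hR0one hx1R0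
  have hq : ∀ x : ℝ, x1 ≤ |x| → 0 ≤ V x + 1 - Ej := by
    intro x hx
    have h1 : R0 ≤ |x| := le_trans hx1R0 hx
    have h2 := hVlower x h1
    have h3 : 1 ≤ |x| := le_trans hx1one hx
    have h4 : |x| ≤ |x|^4 := by nlinarith [h3, abs_nonneg x, sq_nonneg (|x| - 1), sq_nonneg (|x| + 1), sq_nonneg (|x|^2 - 1)]
    have h5 : 16*(1+|Ej|)/lam^2 ≤ |x| := by
      rw [hx1] at hx
      have : (0:ℝ) ≤ R0 := le_trans zero_le_one hR0one
      linarith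
    have h6 : |x|^4 = x^4 := by
      rw [← abs_pow, abs_of_nonneg (by positivity : (0:ℝ) ≤ x^4)]
    have h7 : 16*(1+|Ej|)/lam^2 ≤ x^4 := by rw [← h6]; linarith
    rw [div_le_iff₀ hl2] at h7
    have h8 : 1 + |Ej| ≤ lam^2 * x^4/16 := by nlinarith [h7]
    have h9 : Ej ≤ |Ej| := le_abs_self Ej
    linarith
  have hnopos : ∀ a : ℝ, x1 ≤ a → f a * deriv f a ≤ 0 := by
    intro a ha
    refine no_pos hf (q := fun x => V x + 1 - Ej) (fun x _ => hode x) ?_ hint ha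
    intro x hx
    have hx0 : (0:ℝ) ≤ x := le_trans (le_trans zero_le_one hx1one) hx
    exact hq x (by rwa [abs_of_nonneg hx0])
  have hnoneg : ∀ a : ℝ, x1 ≤ a → 0 ≤ f (-a) * deriv f (-a) := by
    intro a ha
    have hgC : ContDiff ℝ (⊤ : ℕ∞) (fun x : ℝ => f (-x)) := hf.comp contDiff_id.neg
    have hdg : ∀ x : ℝ, deriv (fun y : ℝ => f (-y)) x = -deriv f (-x) := by
      intro x; exact deriv_comp_neg f x
    have hddg : ∀ x : ℝ, deriv (deriv (fun y : ℝ => f (-y))) x = deriv (deriv f) (-x) := by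
      intro x
      have e : deriv (fun y : ℝ => f (-y)) = fun y : ℝ => -deriv f (-y) := funext hdg
      rw [e, deriv.fun_neg (f := fun y : ℝ => deriv f (-y)), deriv_comp_neg (deriv f) x]
      ring
    have hodeg : ∀ x : ℝ, x1 ≤ x →
        deriv (deriv (fun y : ℝ => f (-y))) x = (V x + 1 - Ej) * f (-x) := by
      intro x _
      rw [hddg x, hode (-x), hVeven x]
    have hintg : ∀ a A : ℝ, a ≤ A → (∫ x in a..A, (f (-x))^2) ≤ 1 := by
      intro a A haA
      have e : (∫ x in a..A, (f (-x))^2) = ∫ x in (-A)..(-a), (f x)^2 :=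
        intervalIntegral.integral_comp_neg (fun x => (f x)^2)
      rw [e]; exact hint _ _ (by linarith)
    have hqg : ∀ x : ℝ, x1 ≤ x → 0 ≤ V x + 1 - Ej := by
      intro x hx
      have hx0 : (0:ℝ) ≤ x := le_trans (le_trans zero_le_one hx1one) hx
      exact hq x (by rwa [abs_of_nonneg hx0])
    have h := no_pos hgC (q := fun x => V x + 1 - Ej) hodeg hqg hintg ha
    rw [hdg a] at h
    nlinarith [h]
  have hFTC : ∀ A : ℝ,
      (∫ x in (-A)..A, ((deriv f x)^2 + (V x + 1 - Ej) * (f x)^2))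
        = f A * deriv f A - f (-A) * deriv f (-A) := by
    intro A
    apply intervalIntegral.integral_eq_sub_of_hasDerivAt
    · intro x _
      have h1 := ((hdf x).hasDerivAt).mul ((hdf' x).hasDerivAt)
      have : (deriv f x)^2 + (V x + 1 - Ej) * (f x)^2
          = deriv f x * deriv f x + f x * deriv (deriv f) x := by
        rw [hode x]; ring
      rw [this]
      exact h1
    · exact (ic1.add (((hVcont.add continuous_const).sub continuous_const).mul ic3)).intervalIntegrable _ _
  have hsplit : ∀ A : ℝ, (∫ x in (-A)..A, ((deriv f x)^2 + (V x + 1 - Ej) * (f x)^2))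
      = (∫ x in (-A)..A, (deriv f x)^2) + (∫ x in (-A)..A, (V x + 1) * (f x)^2)
        - Ej * ∫ x in (-A)..A, (f x)^2 := by
    intro A
    have e : ∀ x : ℝ, (deriv f x)^2 + (V x + 1 - Ej) * (f x)^2
        = ((deriv f x)^2 + (V x + 1) * (f x)^2) - Ej * (f x)^2 := by intro x; ring
    simp_rw [e]
    rw [intervalIntegral.integral_sub (f := fun x => (deriv f x)^2 + (V x + 1) * (f x)^2)
        (g := fun x => Ej * (f x)^2) ((ic1.add ic2).intervalIntegrable _ _)
        ((continuous_const.mul ic3).intervalIntegrable _ _),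
      intervalIntegral.integral_add (ic1.intervalIntegrable _ _) (ic2.intervalIntegrable _ _),
      intervalIntegral.integral_const_mul]
  have hkey : ∀ A : ℝ, x1 ≤ A →
      (∫ x in (-A)..A, (deriv f x)^2) + (∫ x in (-A)..A, (V x + 1) * (f x)^2)
        ≤ Ej * ∫ x in (-A)..A, (f x)^2 := by
    intro A hA
    have h := hFTC A
    rw [hsplit A] at h
    have h1 := hnopos A hA
    have h2 := hnoneg A hA
    linarith
  -- nonnegativity of the various interval integrals
  have hd0 : ∀ A : ℝ, 0 ≤ A → 0 ≤ ∫ x in (-A)..A, (deriv f x)^2 := fun A hA =>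
    intervalIntegral.integral_nonneg (by linarith) (fun x _ => sq_nonneg _)
  have hf0 : ∀ A : ℝ, 0 ≤ A → 0 ≤ ∫ x in (-A)..A, (f x)^2 := fun A hA =>
    intervalIntegral.integral_nonneg (by linarith) (fun x _ => sq_nonneg _)
  have hVf : ∀ A : ℝ, 0 ≤ A → (∫ x in (-A)..A, (f x)^2) ≤ ∫ x in (-A)..A, (V x + 1)*(f x)^2 := by
    intro A hA
    apply intervalIntegral.integral_mono_on (by linarith) (ic3.intervalIntegrable _ _)
      (ic2.intervalIntegrable _ _)
    intro x _
    nlinarith [hVnonneg x, sq_nonneg (f x)]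
  have hx1pos : (0:ℝ) < x1 := lt_of_lt_of_le zero_lt_one hx1one
  have hEpos : 0 < Ej := by
    obtain ⟨A, hA1, hA2⟩ : ∃ A : ℝ, x1 ≤ A ∧ 1/2 ≤ ∫ x in (-A)..A, (f x)^2 := by
      have h2 := htend.eventually (eventually_ge_nhds (by norm_num : (1:ℝ)/2 < 1))
      obtain ⟨A, hA⟩ := (h2.and (eventually_ge_atTop x1)).exists
      exact ⟨A, hA.2, hA.1⟩
    have hA0 : (0:ℝ) ≤ A := le_trans hx1pos.le hA1
    by_contra hcon
    push_neg at hcon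
    have hk := hkey A hA1
    have h1 := hd0 A hA0
    have h2 := hVf A hA0
    have h3 : Ej * (∫ x in (-A)..A, (f x)^2) ≤ 0 :=
      mul_nonpos_of_nonpos_of_nonneg hcon (by linarith)
    linarith
  have hEj1 : 1 ≤ Ej := by
    have hev : ∀ᶠ A in atTop, (∫ x in (-A)..A, (f x)^2) ≤ Ej := by
      filter_upwards [eventually_ge_atTop x1] with A hA
      have hA0 : (0:ℝ) ≤ A := le_trans hx1pos.le hA
      have hk := hkey A hA
      have h1 := hd0 A hA0
      have h2 := hVf A hA0
      have h3 := hint (-A) A (by linarith)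
      nlinarith
    exact le_of_tendsto htend hev
  refine ⟨hEj1, ?_, ?_⟩
  · intro R
    rcases le_or_gt R 0 with h | h
    · have h0 : (∫ x in (-R)..R, (deriv f x)^2) ≤ 0 := by
        rw [intervalIntegral.integral_symm R (-R)]
        have h00 : 0 ≤ ∫ x in R..(-R), (deriv f x)^2 :=
          intervalIntegral.integral_nonneg (by linarith : R ≤ -R)
            (fun x _ => sq_nonneg (deriv f x))
        linarith
      linarith
    · set A := max R x1 with hA
      have hRA : R ≤ A := le_max_left _ _
      have hx1A : x1 ≤ A := le_max_right _ _
      have hA0 : (0:ℝ) ≤ A := le_trans hx1pos.le hx1A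
      have h1 : (∫ x in (-R)..R, (deriv f x)^2) ≤ ∫ x in (-A)..A, (deriv f x)^2 := by
        rw [intervalIntegral.integral_of_le (by linarith : -R ≤ R),
          intervalIntegral.integral_of_le (by linarith : -A ≤ A)]
        apply setIntegral_mono_set (ic1.integrableOn_Ioc)
          (Eventually.of_forall fun x => sq_nonneg _)
        exact HasSubset.Subset.eventuallyLE (Ioc_subset_Ioc (by linarith) hRA)
      have hk := hkey A hx1A
      have h2 := hVf A hA0
      have h3 := hf0 A hA0
      have h4 := hint (-A) A (by linarith)
      nlinarith
  · intro R hRR0 hR4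
    have hR1 : 1 ≤ R := le_trans hR0one hRR0
    have hev : ∀ᶠ A in atTop,
        (∫ x in (-A)..A, (f x)^2) ≤ (∫ x in (-R)..R, (f x)^2) + 1/4 := by
      filter_upwards [eventually_ge_atTop (max R x1)] with A hA
      have hRA : R ≤ A := le_trans (le_max_left _ _) hA
      have hx1A : x1 ≤ A := le_trans (le_max_right _ _) hA
      have hA0 : (0:ℝ) ≤ A := le_trans hx1pos.le hx1A
      have hsplit2 : (∫ x in (-A)..A, (f x)^2)
          = (∫ x in (-A)..(-R), (f x)^2) + (∫ x in (-R)..R, (f x)^2)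
            + (∫ x in R..A, (f x)^2) := by
        rw [intervalIntegral.integral_add_adjacent_intervals (ic3.intervalIntegrable _ _)
            (ic3.intervalIntegrable _ _),
          intervalIntegral.integral_add_adjacent_intervals (ic3.intervalIntegrable _ _)
            (ic3.intervalIntegrable _ _)]
      have hR4pos : (0:ℝ) < lam^2*R^4 := by positivity
      have hVbig : ∀ x : ℝ, R ≤ |x| → lam^2*R^4/16 ≤ V x := by
        intro x hx
        have h1 : R0 ≤ |x| := le_trans hRR0 hx
        have h2 := hVlower x h1
        have h3 : R^4 ≤ |x|^4 := pow_le_pow_left₀ (by linarith) hx 4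
        have h6 : |x|^4 = x^4 := by
          rw [← abs_pow, abs_of_nonneg (by positivity : (0:ℝ) ≤ x^4)]
        nlinarith
      have hptw : ∀ x : ℝ, R ≤ |x| → (f x)^2 ≤ (16/(lam^2*R^4)) * ((V x + 1) * (f x)^2) := by
        intro x hx
        have h2 := hVbig x hx
        have hone : 1 ≤ (16/(lam^2*R^4)) * (V x + 1) := by
          calc (1:ℝ) = (16/(lam^2*R^4)) * (lam^2*R^4/16) := by field_simp
            _ ≤ (16/(lam^2*R^4)) * (V x + 1) := by
                apply mul_le_mul_of_nonneg_left (by linarith) (by positivity)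
        nlinarith [sq_nonneg (f x)]
      have hVsum : (∫ x in R..A, ((V x + 1) * (f x)^2))
            + (∫ x in (-A)..(-R), ((V x + 1) * (f x)^2))
          ≤ Ej := by
        have hsplitV : (∫ x in (-A)..A, ((V x + 1) * (f x)^2))
            = (∫ x in (-A)..(-R), ((V x + 1) * (f x)^2))
              + (∫ x in (-R)..R, ((V x + 1) * (f x)^2))
              + (∫ x in R..A, ((V x + 1) * (f x)^2)) := by
          rw [intervalIntegral.integral_add_adjacent_intervals (ic2.intervalIntegrable _ _)
              (ic2.intervalIntegrable _ _),
            intervalIntegral.integral_add_adjacent_intervals (ic2.intervalIntegrable _ _)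
              (ic2.intervalIntegrable _ _)]
        have hmid : 0 ≤ ∫ x in (-R)..R, ((V x + 1) * (f x)^2) :=
          intervalIntegral.integral_nonneg (by linarith) (fun x _ => by
            nlinarith [hVnonneg x, sq_nonneg (f x)])
        have hk := hkey A hx1A
        have h1 := hd0 A hA0
        have h3 := hf0 A hA0
        have h4 := hint (-A) A (by linarith)
        nlinarith
      have htail_r : (∫ x in R..A, (f x)^2) ≤ (16/(lam^2*R^4)) * ∫ x in R..A, ((V x + 1) * (f x)^2) := by
        rw [← intervalIntegral.integral_const_mul]
        apply intervalIntegral.integral_mono_on hRA (ic3.intervalIntegrable _ _)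
          ((continuous_const.mul ic2).intervalIntegrable _ _)
        intro x hx
        exact hptw x (by rw [abs_of_nonneg (by linarith [hx.1] : (0:ℝ) ≤ x)]; exact hx.1)
      have htail_l : (∫ x in (-A)..(-R), (f x)^2) ≤ (16/(lam^2*R^4)) * ∫ x in (-A)..(-R), ((V x + 1) * (f x)^2) := by
        rw [← intervalIntegral.integral_const_mul]
        apply intervalIntegral.integral_mono_on (by linarith) (ic3.intervalIntegrable _ _)
          ((continuous_const.mul ic2).intervalIntegrable _ _)
        intro x hx
        have hxle : x ≤ -R := hx.2
        exact hptw x (by rw [abs_of_nonpos (by linarith : x ≤ 0)]; linarith)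
      have hVr : 0 ≤ ∫ x in R..A, ((V x + 1) * (f x)^2) :=
        intervalIntegral.integral_nonneg hRA (fun x _ => by
          nlinarith [hVnonneg x, sq_nonneg (f x)])
      have hVl : 0 ≤ ∫ x in (-A)..(-R), ((V x + 1) * (f x)^2) :=
        intervalIntegral.integral_nonneg (by linarith) (fun x _ => by
          nlinarith [hVnonneg x, sq_nonneg (f x)])
      have hc : (16/(lam^2*R^4)) * Ej ≤ 1/8 := by
        rw [div_mul_eq_mul_div, div_le_iff₀ hR4pos]
        nlinarith [hEj1]
      have hcoef : (0:ℝ) ≤ 16/(lam^2*R^4) := by positivity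
      nlinarith [mul_le_mul_of_nonneg_left hVsum hcoef]
    have hlim := le_of_tendsto htend hev
    linarith

/-- Bessel inequality for finitely many orthonormal L² functions against an
interval indicator. -/
lemma bessel_indicator {f : ℕ → ℝ → ℝ}
    (hL2 : ∀ j, MemLp (f j) 2 (volume : Measure ℝ))
    (horth : ∀ i j, ∫ x : ℝ, f i x * f j x = if i = j then (1:ℝ) else 0)
    (t : Finset ℕ) {a b : ℝ} (hab : a ≤ b) :
    ∑ j ∈ t, (∫ x in a..b, f j x)^2 ≤ b - a := by
  classical
  set v : ℕ → Lp ℝ 2 (volume : Measure ℝ) := fun j => (hL2 j).toLp (f j) with hv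
  have hON : Orthonormal ℝ v := by
    rw [orthonormal_iff_ite]
    intro i j
    have h1 : (inner ℝ (v i) (v j) : ℝ) = ∫ x : ℝ, f i x * f j x := by
      rw [MeasureTheory.L2.inner_def]
      apply MeasureTheory.integral_congr_ae
      filter_upwards [(hL2 i).coeFn_toLp, (hL2 j).coeFn_toLp] with x hi hj
      rw [hv]
      simp only [hi, hj, RCLike.inner_apply', conj_trivial]
    rw [h1, horth i j]
  have hgmem : MemLp ((Set.Ioc a b).indicator (fun _ => (1:ℝ))) 2 (volume : Measure ℝ) :=
    memLp_indicator_const 2 measurableSet_Ioc 1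
      (Or.inr (by rw [Real.volume_Ioc]; exact ENNReal.ofReal_ne_top))
  set g : Lp ℝ 2 (volume : Measure ℝ) := hgmem.toLp _ with hg
  have hinner : ∀ j, (inner ℝ (v j) g : ℝ) = ∫ x in a..b, f j x := by
    intro j
    rw [MeasureTheory.L2.inner_def]
    have h1 : ∫ x : ℝ, (inner ℝ (v j x) (g x) : ℝ)
        = ∫ x : ℝ, (Set.Ioc a b).indicator (f j) x := by
      apply MeasureTheory.integral_congr_ae
      filter_upwards [(hL2 j).coeFn_toLp, hgmem.coeFn_toLp] with x hj hgx
      rw [hv, hg]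
      simp only [hj, hgx, RCLike.inner_apply', conj_trivial]
      by_cases hx : x ∈ Set.Ioc a b
      · simp [Set.indicator_of_mem hx]
      · simp [Set.indicator_of_notMem hx]
    rw [h1, MeasureTheory.integral_indicator measurableSet_Ioc, intervalIntegral.integral_of_le hab]
  have hnorm : ‖g‖^2 = b - a := by
    rw [← real_inner_self_eq_norm_sq]
    rw [MeasureTheory.L2.inner_def]
    have h1 : ∫ x : ℝ, (inner ℝ (g x) (g x) : ℝ)
        = ∫ x : ℝ, (Set.Ioc a b).indicator (fun _ => (1:ℝ)) x := by
      apply MeasureTheory.integral_congr_ae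
      filter_upwards [hgmem.coeFn_toLp] with x hgx
      rw [hgx, RCLike.inner_apply', conj_trivial]
      by_cases hx : x ∈ Set.Ioc a b
      · simp [Set.indicator_of_mem hx]
      · simp [Set.indicator_of_notMem hx]
    rw [h1, integral_indicator_const _ measurableSet_Ioc]
    simp [Real.volume_Ioc, ENNReal.toReal_ofReal (by linarith : (0:ℝ) ≤ b - a), hab]
  have hbessel := hON.sum_inner_products_le (s := t) g
  rw [hnorm] at hbessel
  refine le_trans (le_of_eq ?_) hbessel
  apply Finset.sum_congr rfl
  intro j _
  rw [hinner j, Real.norm_eq_abs, sq_abs]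

/-- Poincaré-type inequality on an interval for C¹ functions. -/
lemma poincare_interval {f : ℝ → ℝ} (hf : ContDiff ℝ (⊤ : ℕ∞) f) {a L : ℝ} (hL : 0 < L) :
    L * (∫ x in a..(a+L), (f x)^2) - L^3 * (∫ x in a..(a+L), (deriv f x)^2)
      ≤ (∫ x in a..(a+L), f x)^2 := by
  have hdf : Differentiable ℝ f := hf.differentiable (by simp)
  have hdf' : Differentiable ℝ (deriv f) :=
    ((contDiff_infty_iff_deriv.mp (hf.of_le (mod_cast le_top))).2).differentiable
      (by simp)
  have hcf' : Continuous (deriv f) := hdf'.continuous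
  set b := a + L with hb
  have hab : a ≤ b := by rw [hb]; linarith
  set D := ∫ x in a..b, (deriv f x)^2 with hD
  have hD0 : 0 ≤ D := intervalIntegral.integral_nonneg hab (fun x _ => sq_nonneg _)
  -- pointwise bound (f x - f a)^2 ≤ L * D for x ∈ [a,b]
  have key1 : ∀ x ∈ Set.Icc a b, (f x - f a)^2 ≤ L * D := by
    intro x hx
    have hax : a ≤ x := hx.1
    have hxb : x ≤ b := hx.2
    have hftc : ∫ y in a..x, deriv f y = f x - f a := by
      apply intervalIntegral.integral_deriv_eq_sub
      · intro y _; exact hdf y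
      · exact hcf'.intervalIntegrable _ _
    have hcs : (∫ y in a..x, deriv f y)^2 ≤ (x - a) * ∫ y in a..x, (deriv f y)^2 :=
      sq_integral_le hcf' hax
    have hmono : (∫ y in a..x, (deriv f y)^2) ≤ D := by
      rw [hD, intervalIntegral.integral_of_le hax, intervalIntegral.integral_of_le hab]
      apply setIntegral_mono_set ((hcf'.pow 2).integrableOn_Ioc)
        (Eventually.of_forall fun y => sq_nonneg _)
      exact HasSubset.Subset.eventuallyLE (Set.Ioc_subset_Ioc le_rfl hxb)
    have hxa : x - a ≤ L := by rw [hb] at hxb; linarith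
    have h1 : (∫ y in a..x, (deriv f y)^2) ≥ 0 :=
      intervalIntegral.integral_nonneg hax (fun y _ => sq_nonneg _)
    calc (f x - f a)^2 = (∫ y in a..x, deriv f y)^2 := by rw [hftc]
      _ ≤ (x - a) * ∫ y in a..x, (deriv f y)^2 := hcs
      _ ≤ L * D := by nlinarith
  -- integrate
  have key2 : (∫ x in a..b, (f x - f a)^2) ≤ L * (L * D) := by
    have hmm := intervalIntegral.integral_mono_on hab
      (((hdf.continuous.sub continuous_const).pow 2).intervalIntegrable _ _)
      (_root_.intervalIntegrable_const (μ := volume) (c := L * D)) key1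
    calc (∫ x in a..b, (f x - f a)^2) ≤ ∫ _x in a..b, L * D := hmm
      _ = (b - a) * (L * D) := by rw [intervalIntegral.integral_const]; simp [smul_eq_mul]
      _ = L * (L * D) := by rw [hb]; ring
  -- expand
  set S := ∫ x in a..b, f x with hS
  set Q := ∫ x in a..b, (f x)^2 with hQ
  have hfint : IntervalIntegrable f volume a b := hdf.continuous.intervalIntegrable _ _
  have hf2int : IntervalIntegrable (fun x => (f x)^2) volume a b :=
    (hdf.continuous.pow 2).intervalIntegrable _ _
  have key3 : (∫ x in a..b, (f x - f a)^2) = Q - 2 * f a * S + L * (f a)^2 := by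
    have e : ∀ x : ℝ, (f x - f a)^2 = (f x)^2 - (2 * f a) * f x + (f a)^2 := by
      intro x; ring
    simp_rw [e]
    rw [intervalIntegral.integral_add (hf2int.sub (hfint.const_mul _)) intervalIntegrable_const,
      intervalIntegral.integral_sub hf2int (hfint.const_mul _),
      intervalIntegral.integral_const_mul, intervalIntegral.integral_const]
    simp only [smul_eq_mul]
    rw [hb, hS, hQ]
    ring
  rw [key3] at key2
  nlinarith [sq_nonneg (S - L * f a), key2, hL]

/-- Counting bound: at most `C Λ^(3/4)` indices with eigenvalue at most `Λ`. -/
lemma counting_bound {lam μ : ℝ} (hlam : lam ≠ 0) {f : ℕ → ℝ → ℝ} {E : ℕ → ℝ}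
    (hsmooth : ∀ j, ContDiff ℝ (⊤ : ℕ∞) (f j))
    (hL2 : ∀ j, MemLp (f j) 2 (volume : Measure ℝ))
    (horth : ∀ i j, ∫ x : ℝ, f i x * f j x = if i = j then (1:ℝ) else 0)
    (hgrad : ∀ j R, (∫ x in (-R)..R, (deriv (f j) x)^2) ≤ E j)
    (hconc : ∀ j (R : ℝ), 1 + 2*Real.sqrt |μ|/|lam| ≤ R → 128 * E j ≤ lam^2 * R^4 →
        3/4 ≤ ∫ x in (-R)..R, (f j x)^2) :
    ∃ C : ℝ, 0 < C ∧ ∀ Λ : ℝ, 1 ≤ Λ → ∀ t : Finset ℕ, (∀ j ∈ t, E j ≤ Λ) →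
      (t.card : ℝ) ≤ C * Λ ^ ((3:ℝ)/4) := by
  classical
  set R0 : ℝ := 1 + 2*Real.sqrt |μ|/|lam| with hR0
  have hlamabs : (0:ℝ) < |lam| := abs_pos.mpr hlam
  have hR0one : 1 ≤ R0 := by
    rw [hR0]; have : 0 ≤ 2*Real.sqrt |μ|/|lam| := by positivity
    linarith
  set c1 : ℝ := R0 + 128/lam^2 + 1 with hc1
  have hl2 : (0:ℝ) < lam^2 := by positivity
  have hc1one : 1 ≤ c1 := by
    rw [hc1]; have h1 : 0 ≤ 128/lam^2 := by positivity
    linarith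
  have hc1R0 : R0 ≤ c1 := by
    rw [hc1]; have h1 : 0 ≤ 128/lam^2 := by positivity
    linarith
  have hc1lam : 128/lam^2 ≤ c1 := by
    rw [hc1]; have h1 : (0:ℝ) ≤ R0 := by linarith
    linarith
  refine ⟨8*c1 + 2, by positivity, ?_⟩
  intro Λ hΛ t ht
  have hΛ0 : (0:ℝ) < Λ := lt_of_lt_of_le zero_lt_one hΛ
  set R : ℝ := c1 * Λ ^ ((1:ℝ)/4) with hR
  have hΛq : (1:ℝ) ≤ Λ ^ ((1:ℝ)/4) := Real.one_le_rpow hΛ (by norm_num)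
  have hΛq4 : (Λ ^ ((1:ℝ)/4))^(4:ℕ) = Λ := by
    rw [← Real.rpow_natCast (Λ ^ ((1:ℝ)/4)) 4, ← Real.rpow_mul hΛ0.le]
    norm_num
  have hΛh : (0:ℝ) < Λ ^ ((1:ℝ)/2) := Real.rpow_pos_of_pos hΛ0 _
  have hΛh2 : (Λ ^ ((1:ℝ)/2))^(2:ℕ) = Λ := by
    rw [← Real.rpow_natCast (Λ ^ ((1:ℝ)/2)) 2, ← Real.rpow_mul hΛ0.le]
    norm_num
  have hRpos : 0 < R := by
    rw [hR]; positivity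
  have hRR0 : R0 ≤ R := by
    rw [hR]
    calc R0 ≤ c1 := hc1R0
      _ = c1 * 1 := by ring
      _ ≤ c1 * Λ ^ ((1:ℝ)/4) := by
          apply mul_le_mul_of_nonneg_left hΛq (by linarith)
  have hR4 : ∀ j ∈ t, 128 * E j ≤ lam^2 * R^4 := by
    intro j hj
    have h1 : lam^2 * R^4 = lam^2 * c1^4 * Λ := by
      rw [hR, mul_pow, hΛq4]; ring
    have h2 : 128/lam^2 ≤ c1^4 := by
      calc 128/lam^2 ≤ c1 := hc1lam
        _ ≤ c1^4 := by nlinarith [hc1one, sq_nonneg (c1 - 1), sq_nonneg c1, sq_nonneg (c1^2 - 1)]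
    have h3 : (128:ℝ) ≤ lam^2 * c1^4 := by
      rw [div_le_iff₀ hl2] at h2; linarith [h2]
    have h4 := ht j hj
    rw [h1]
    nlinarith [h4, h3, hΛ0]
  -- the grid
  set M : ℕ := ⌈(4:ℝ) * R * Λ ^ ((1:ℝ)/2)⌉₊ with hM
  have hMpos : 0 < M := by
    rw [hM]
    apply Nat.ceil_pos.mpr
    positivity
  have hMR : (M:ℝ) ≠ 0 := Nat.cast_ne_zero.mpr hMpos.ne'
  have hMge : (4:ℝ) * R * Λ ^ ((1:ℝ)/2) ≤ M := Nat.le_ceil _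
  have hMle : (M:ℝ) ≤ 4 * R * Λ ^ ((1:ℝ)/2) + 1 := by
    rw [hM]
    exact le_of_lt (Nat.ceil_lt_add_one (by positivity))
  set ℓ : ℝ := 2*R/M with hℓ
  have hℓpos : 0 < ℓ := by rw [hℓ]; positivity
  have hℓle : ℓ ≤ 1/(2 * Λ ^ ((1:ℝ)/2)) := by
    rw [hℓ, div_le_div_iff₀ (by positivity) (by positivity)]
    nlinarith [hMge, hRpos, hΛh]
  have hℓ2 : ℓ^2 * Λ ≤ 1/4 := by
    have h1 : ℓ^2 ≤ (1/(2 * Λ ^ ((1:ℝ)/2)))^2 := by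
      exact pow_le_pow_left₀ hℓpos.le hℓle 2
    have h2 : (1/(2 * Λ ^ ((1:ℝ)/2)))^2 = 1/(4*Λ) := by
      rw [div_pow, mul_pow, hΛh2]
      norm_num
    rw [h2] at h1
    calc ℓ^2 * Λ ≤ 1/(4*Λ) * Λ := by apply mul_le_mul_of_nonneg_right h1 hΛ0.le
      _ = 1/4 := by field_simp
  -- grid points
  set P : ℕ → ℝ := fun m => -R + m * ℓ with hP
  have hP0 : P 0 = -R := by simp [hP]
  have hPM : P M = R := by
    rw [hP]
    simp only
    rw [hℓ]
    field_simp
    ring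
  have hPsucc : ∀ m : ℕ, P (m+1) = P m + ℓ := by
    intro m; rw [hP]; push_cast; ring
  -- lower bound for each j in t
  have hlow : ∀ j ∈ t, ℓ/2 ≤ ∑ m ∈ Finset.range M, (∫ x in P m..P (m+1), f j x)^2 := by
    intro j hj
    have hpoin : ∀ m ∈ Finset.range M,
        ℓ * (∫ x in P m..P (m+1), (f j x)^2) - ℓ^3 * (∫ x in P m..P (m+1), (deriv (f j) x)^2)
          ≤ (∫ x in P m..P (m+1), f j x)^2 := by
      intro m _
      have := poincare_interval (hsmooth j) (a := P m) hℓpos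
      rwa [← hPsucc m] at this
    have hsum := Finset.sum_le_sum hpoin
    -- telescoping sums
    have hcf : Continuous (f j) := (hsmooth j).continuous
    have hcf' : Continuous (deriv (f j)) :=
      (((contDiff_infty_iff_deriv.mp ((hsmooth j).of_le (mod_cast le_top))).2).differentiable
        (by simp)).continuous
    have htel1 : ∑ m ∈ Finset.range M, (∫ x in P m..P (m+1), (f j x)^2)
        = ∫ x in (-R)..R, (f j x)^2 := by
      rw [← hP0, ← hPM]
      exact intervalIntegral.sum_integral_adjacent_intervals
        (fun k _ => (hcf.pow 2).intervalIntegrable _ _)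
    have htel2 : ∑ m ∈ Finset.range M, (∫ x in P m..P (m+1), (deriv (f j) x)^2)
        = ∫ x in (-R)..R, (deriv (f j) x)^2 := by
      rw [← hP0, ← hPM]
      exact intervalIntegral.sum_integral_adjacent_intervals
        (fun k _ => (hcf'.pow 2).intervalIntegrable _ _)
    have hexp : ∑ m ∈ Finset.range M,
        (ℓ * (∫ x in P m..P (m+1), (f j x)^2) - ℓ^3 * (∫ x in P m..P (m+1), (deriv (f j) x)^2))
        = ℓ * (∫ x in (-R)..R, (f j x)^2) - ℓ^3 * (∫ x in (-R)..R, (deriv (f j) x)^2) := by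
      rw [Finset.sum_sub_distrib, ← Finset.mul_sum, ← Finset.mul_sum, htel1, htel2]
    rw [hexp] at hsum
    have hconcj := hconc j R hRR0 (hR4 j hj)
    have hgradj : (∫ x in (-R)..R, (deriv (f j) x)^2) ≤ Λ :=
      le_trans (hgrad j R) (ht j hj)
    have hgrad0 : 0 ≤ ∫ x in (-R)..R, (deriv (f j) x)^2 :=
      intervalIntegral.integral_nonneg (by linarith) (fun x _ => sq_nonneg _)
    refine le_trans ?_ hsum
    have h1 : ℓ^3 * (∫ x in (-R)..R, (deriv (f j) x)^2) ≤ ℓ^3 * Λ := by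
      apply mul_le_mul_of_nonneg_left hgradj (by positivity)
    have h2 : ℓ^3 * Λ = ℓ * (ℓ^2 * Λ) := by ring
    have h3 : ℓ * (ℓ^2*Λ) ≤ ℓ * (1/4) := mul_le_mul_of_nonneg_left hℓ2 hℓpos.le
    have h4 : ℓ * (3/4) ≤ ℓ * (∫ x in (-R)..R, (f j x)^2) :=
      mul_le_mul_of_nonneg_left hconcj hℓpos.le
    linarith
  -- Bessel upper bound for each m
  have hup : ∀ m ∈ Finset.range M, ∑ j ∈ t, (∫ x in P m..P (m+1), f j x)^2 ≤ ℓ := by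
    intro m _
    have h := bessel_indicator hL2 horth t (a := P m) (b := P (m+1))
      (by rw [hPsucc m]; linarith)
    have : P (m+1) - P m = ℓ := by rw [hPsucc m]; ring
    rwa [this] at h
  -- combine
  have hcomb : (t.card : ℝ) * (ℓ/2) ≤ (M : ℝ) * ℓ := by
    calc (t.card : ℝ) * (ℓ/2) = ∑ _j ∈ t, ℓ/2 := by
          rw [Finset.sum_const, nsmul_eq_mul]
      _ ≤ ∑ j ∈ t, ∑ m ∈ Finset.range M, (∫ x in P m..P (m+1), f j x)^2 :=
          Finset.sum_le_sum hlow
      _ = ∑ m ∈ Finset.range M, ∑ j ∈ t, (∫ x in P m..P (m+1), f j x)^2 :=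
          Finset.sum_comm
      _ ≤ ∑ _m ∈ Finset.range M, ℓ := Finset.sum_le_sum hup
      _ = (M : ℝ) * ℓ := by rw [Finset.sum_const, nsmul_eq_mul, Finset.card_range]
  have hcard : (t.card : ℝ) ≤ 2 * M := by
    have := mul_le_mul_of_nonneg_right hcomb (le_of_lt (inv_pos.mpr hℓpos))
    rw [mul_assoc, mul_assoc] at this
    rw [show ℓ/2 * ℓ⁻¹ = (2:ℝ)⁻¹ by field_simp, show ℓ * ℓ⁻¹ = 1 by field_simp] at this
    nlinarith [this]
  have hfinal : (2:ℝ) * M ≤ (8*c1 + 2) * Λ ^ ((3:ℝ)/4) := by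
    have h34 : Λ ^ ((1:ℝ)/4) * Λ ^ ((1:ℝ)/2) = Λ ^ ((3:ℝ)/4) := by
      rw [← Real.rpow_add hΛ0]; norm_num
    have h1 : (1:ℝ) ≤ Λ ^ ((3:ℝ)/4) := Real.one_le_rpow hΛ (by norm_num)
    have h2 : (M:ℝ) ≤ 4 * c1 * Λ ^ ((3:ℝ)/4) + 1 := by
      calc (M:ℝ) ≤ 4 * R * Λ ^ ((1:ℝ)/2) + 1 := hMle
        _ = 4 * c1 * (Λ ^ ((1:ℝ)/4) * Λ ^ ((1:ℝ)/2)) + 1 := by rw [hR]; ring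
        _ = 4 * c1 * Λ ^ ((3:ℝ)/4) + 1 := by rw [h34]
    nlinarith [h1, h2, hc1one]
  linarith

/-- Schatten property for negative powers of the Engel-group anharmonic oscillator
`H_{λ,μ} = −d²/du² + (1/4)(λu² − μ/λ)²` on `L²(ℝ)`: if `γ > 3/(4r)` then for any
orthonormal family of (smooth, square integrable) eigenfunctions of `I + H_{λ,μ}`
with eigenvalues `E j`, one has `Σ_j (E j)^(−γr) < ∞`, i.e.
`(I + H_{λ,μ})^(−γ) ∈ S_r(L²(ℝ))`. -/
theorem engel_anharmonic_schatten (lam μ : ℝ) (hlam : lam ≠ 0) (r γ : ℝ)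
    (hr : 1 ≤ r) (hγ : 3 / (4 * r) < γ)
    (f : ℕ → ℝ → ℝ) (E : ℕ → ℝ)
    (hsmooth : ∀ j, ContDiff ℝ (⊤ : ℕ∞) (f j))
    (hL2 : ∀ j, MemLp (f j) 2 (volume : Measure ℝ))
    (horth : ∀ i j, ∫ x : ℝ, f i x * f j x = if i = j then (1 : ℝ) else 0)
    (heig : ∀ j x, -(deriv (deriv (f j)) x)
        + (1 / 4) * (lam * x ^ 2 - μ / lam) ^ 2 * f j x + f j x = E j * f j x) :
    Summable fun j => E j ^ (-(γ * r)) := by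
  classical
  have hap : ∀ j, 1 ≤ E j ∧ (∀ R : ℝ, (∫ x in (-R)..R, (deriv (f j) x)^2) ≤ E j) ∧
      ∀ R : ℝ, 1 + 2*Real.sqrt |μ|/|lam| ≤ R → 128 * E j ≤ lam^2 * R^4 →
        3/4 ≤ ∫ x in (-R)..R, (f j x)^2 := fun j =>
    apriori hlam (hsmooth j) (hL2 j) (by simpa using horth j j) (heig j)
  have hE1 : ∀ j, 1 ≤ E j := fun j => (hap j).1
  obtain ⟨C, hC, hcount⟩ := counting_bound hlam hsmooth hL2 horth
    (fun j R => (hap j).2.1 R) (fun j R h1 h2 => (hap j).2.2 R h1 h2)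
  have hr0 : (0:ℝ) < r := lt_of_lt_of_le zero_lt_one hr
  have hs34 : 3/4 < γ * r := by
    have h1 : 3/(4*r) * r < γ * r := mul_lt_mul_of_pos_right hγ hr0
    have h2 : 3/(4*r) * r = 3/4 := by field_simp
    linarith
  set q : ℝ := (2:ℝ) ^ ((3:ℝ)/4 - γ * r) with hqdef
  have hq0 : 0 < q := Real.rpow_pos_of_pos two_pos _
  have hq1 : q < 1 := Real.rpow_lt_one_of_one_lt_of_neg one_lt_two (by linarith)
  set A : ℝ := C * (2:ℝ) ^ ((3:ℝ)/4) with hAdef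
  have hA0 : 0 ≤ A := by
    have := Real.rpow_pos_of_pos two_pos ((3:ℝ)/4)
    positivity
  apply summable_of_sum_range_le (c := A * (1 - q)⁻¹)
  · intro j
    exact Real.rpow_nonneg (by linarith [hE1 j]) _
  intro n
  set φ : ℕ → ℕ := fun j => Nat.log 2 ⌊E j⌋₊ with hφ
  rw [← Finset.sum_fiberwise_of_maps_to
    (g := φ) (t := (Finset.range n).image φ)
    (fun j hj => Finset.mem_image_of_mem φ hj) (fun j => E j ^ (-(γ * r)))]
  have hfiber : ∀ k ∈ (Finset.range n).image φ,
      (∑ j ∈ (Finset.range n).filter (fun j => φ j = k), E j ^ (-(γ * r))) ≤ A * q ^ k := by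
    intro k _
    set t := (Finset.range n).filter (fun j => φ j = k) with htdef
    have hkey : ∀ j ∈ t, E j ≤ (2:ℝ)^(k+1) ∧ ((2:ℝ)^k) ≤ E j := by
      intro j hj
      have hjk : φ j = k := (Finset.mem_filter.mp hj).2
      have hfl1 : 1 ≤ ⌊E j⌋₊ := Nat.one_le_iff_ne_zero.mpr
        (by
          have : (1:ℕ) ≤ ⌊E j⌋₊ := Nat.le_floor (by exact_mod_cast hE1 j)
          omega)
      constructor
      · have h1 : ⌊E j⌋₊ < 2^(k+1) := by
          rw [← hjk, hφ]
          exact Nat.lt_pow_succ_log_self (by norm_num) _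
        have h2 : E j < (⌊E j⌋₊ : ℝ) + 1 := Nat.lt_floor_add_one _
        have h3 : (⌊E j⌋₊ : ℝ) + 1 ≤ ((2^(k+1) : ℕ) : ℝ) := by
          exact_mod_cast Nat.succ_le_of_lt h1
        have h4 : ((2^(k+1) : ℕ) : ℝ) = (2:ℝ)^(k+1) := by push_cast; ring
        linarith
      · have h1 : 2^k ≤ ⌊E j⌋₊ := by
          rw [← hjk, hφ]
          exact Nat.pow_log_le_self 2 (by omega)
        have h2 : (⌊E j⌋₊ : ℝ) ≤ E j := Nat.floor_le (by linarith [hE1 j])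
        have h3 : ((2^k : ℕ) : ℝ) ≤ (⌊E j⌋₊ : ℝ) := by exact_mod_cast h1
        have h4 : ((2^k : ℕ) : ℝ) = (2:ℝ)^k := by push_cast; ring
        linarith
    have hcard : (t.card : ℝ) ≤ C * ((2:ℝ)^(k+1)) ^ ((3:ℝ)/4) := by
      apply hcount ((2:ℝ)^(k+1)) (one_le_pow₀ one_le_two) t
      intro j hj
      exact (hkey j hj).1
    have hterm : ∀ j ∈ t, E j ^ (-(γ * r)) ≤ ((2:ℝ)^k) ^ (-(γ * r)) := by
      intro j hj
      exact Real.rpow_le_rpow_of_nonpos (by positivity) (hkey j hj).2 (by linarith)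
    have hsum1 : (∑ j ∈ t, E j ^ (-(γ * r))) ≤ (t.card : ℝ) * ((2:ℝ)^k) ^ (-(γ * r)) := by
      have := Finset.sum_le_card_nsmul t _ _ hterm
      rwa [nsmul_eq_mul] at this
    have hsum2 : (t.card : ℝ) * ((2:ℝ)^k) ^ (-(γ * r))
        ≤ (C * ((2:ℝ)^(k+1)) ^ ((3:ℝ)/4)) * ((2:ℝ)^k) ^ (-(γ * r)) := by
      apply mul_le_mul_of_nonneg_right hcard
      exact Real.rpow_nonneg (by positivity) _
    have heq : (C * ((2:ℝ)^(k+1)) ^ ((3:ℝ)/4)) * ((2:ℝ)^k) ^ (-(γ * r)) = A * q ^ k := by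
      rw [hAdef, hqdef]
      rw [← Real.rpow_natCast (2:ℝ) (k+1), ← Real.rpow_natCast (2:ℝ) k,
        ← Real.rpow_mul (by norm_num : (0:ℝ) ≤ 2),
        ← Real.rpow_mul (by norm_num : (0:ℝ) ≤ 2),
        ← Real.rpow_natCast ((2:ℝ) ^ ((3:ℝ)/4 - γ * r)) k,
        ← Real.rpow_mul (by norm_num : (0:ℝ) ≤ 2)]
      rw [mul_assoc, ← Real.rpow_add two_pos, mul_assoc, ← Real.rpow_add two_pos]
      congr 1
      push_cast
      ring
    calc (∑ j ∈ t, E j ^ (-(γ * r))) ≤ (t.card : ℝ) * ((2:ℝ)^k) ^ (-(γ * r)) := hsum1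
      _ ≤ (C * ((2:ℝ)^(k+1)) ^ ((3:ℝ)/4)) * ((2:ℝ)^k) ^ (-(γ * r)) := hsum2
      _ = A * q ^ k := heq
  calc (∑ k ∈ (Finset.range n).image φ, ∑ j ∈ (Finset.range n).filter (fun j => φ j = k),
        E j ^ (-(γ * r)))
      ≤ ∑ k ∈ (Finset.range n).image φ, A * q ^ k := Finset.sum_le_sum hfiber
    _ = A * ∑ k ∈ (Finset.range n).image φ, q ^ k := by rw [Finset.mul_sum]
    _ ≤ A * (1 - q)⁻¹ := by
        apply mul_le_mul_of_nonneg_left _ hA0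
        calc (∑ k ∈ (Finset.range n).image φ, q ^ k) ≤ ∑' k : ℕ, q ^ k :=
              Summable.sum_le_tsum _ (fun k _ => (pow_pos hq0 k).le)
                (summable_geometric_of_lt_one hq0.le hq1)
          _ = (1 - q)⁻¹ := tsum_geometric_of_lt_one hq0.le hq1
end
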